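/- If G has maximum SLEE among all graphs on n vertices with a given number r of cut vertices (with 1 ≤ r ≤ n - 3), then G is connected. -/

import Mathlib

open scoped Classical

variable {V : Type*}

/-- The signless Laplacian matrix `Q = D + A` of a graph. -/
noncomputable def sLap (G : SimpleGraph V) [Fintype V] : Matrix V V ℝ :=
  Matrix.diagonal (fun v => (G.degree v : ℝ)) + G.adjMatrix ℝ

theorem sLap_isHermitian (G : SimpleGraph V) [Fintype V] : (sLap G).IsHermitian := by
  unfold sLap
  rw [Matrix.IsHermitian, Matrix.conjTranspose_eq_transpose_of_trivial, Matrix.transpose_add,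
    Matrix.diagonal_transpose, SimpleGraph.transpose_adjMatrix]

/-- The Laplacian matrix `L = D - A` of a graph. -/
noncomputable def lap (G : SimpleGraph V) [Fintype V] : Matrix V V ℝ :=
  Matrix.diagonal (fun v => (G.degree v : ℝ)) - G.adjMatrix ℝ

theorem lap_isHermitian (G : SimpleGraph V) [Fintype V] : (lap G).IsHermitian := by
  unfold lap
  rw [Matrix.IsHermitian, Matrix.conjTranspose_eq_transpose_of_trivial, Matrix.transpose_sub,
    Matrix.diagonal_transpose, SimpleGraph.transpose_adjMatrix]

/-- The signless Laplacian Estrada index: the sum of `exp qᵢ` over the eigenvalues of `Q`. -/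
noncomputable def SLEE (G : SimpleGraph V) [Fintype V] : ℝ :=
  ∑ i, Real.exp ((sLap_isHermitian G).eigenvalues i)

/-- The Laplacian Estrada index: the sum of `exp μᵢ` over the eigenvalues of `L`. -/
noncomputable def LEE (G : SimpleGraph V) [Fintype V] : ℝ :=
  ∑ i, Real.exp ((lap_isHermitian G).eigenvalues i)

/-- Semi-edge walks of length `k` from `x` to `y`: a sequence of `k+1` vertices and `k`
edges of `G` such that consecutive vertices are (not necessarily distinct) endpoints of
the intervening edge. -/
def semiEdgeWalks (G : SimpleGraph V) (k : ℕ) (x y : V) :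
    Set ((Fin (k + 1) → V) × (Fin k → Sym2 V)) :=
  {w | w.1 0 = x ∧ w.1 (Fin.last k) = y ∧
    ∀ i : Fin k, w.2 i ∈ G.edgeSet ∧ w.1 i.castSucc ∈ w.2 i ∧ w.1 i.succ ∈ w.2 i}

/-- Closed semi-edge walks of length `k` in `G`. -/
def closedSemiEdgeWalks (G : SimpleGraph V) (k : ℕ) :
    Set ((Fin (k + 1) → V) × (Fin k → Sym2 V)) :=
  {w | w.1 0 = w.1 (Fin.last k) ∧
    ∀ i : Fin k, w.2 i ∈ G.edgeSet ∧ w.1 i.castSucc ∈ w.2 i ∧ w.1 i.succ ∈ w.2 i}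

/-- The number of connected components of a graph. -/
noncomputable def numComponents (G : SimpleGraph V) : ℕ := Nat.card G.ConnectedComponent

/-- A cut vertex: a vertex whose removal increases the number of connected components. -/
def IsCutVertex (G : SimpleGraph V) (v : V) : Prop :=
  numComponents G < numComponents (G.induce ({v}ᶜ : Set V))

/-- The number of cut vertices of a graph. -/
noncomputable def cutVertexCount (G : SimpleGraph V) [Fintype V] : ℕ :=
  (Finset.univ.filter (fun v => IsCutVertex G v)).card

/-- The graph obtained from `G` by adding the edge `uv`. -/
def addEdge (G : SimpleGraph V) (u v : V) : SimpleGraph V :=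
  G ⊔ SimpleGraph.fromEdgeSet {s(u, v)}

/-- A block of `G`: a maximal vertex set inducing a connected subgraph with no cut vertex. -/
def IsBlock (G : SimpleGraph V) (B : Set V) : Prop :=
  (G.induce B).Connected ∧ (∀ v : B, ¬ IsCutVertex (G.induce B) v) ∧
  ∀ C : Set V, B ⊆ C → (G.induce C).Connected → (∀ v : C, ¬ IsCutVertex (G.induce C) v) →
    B = C

/-!
The signless Laplacian `Q` of a graph has nonnegative entries which grow when edges are added, so
each term of `SLEE G = ∑ₖ tr (Qᵏ) / k!` weakly increases with `G`, while the term `tr Q = 2|E|`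
increases strictly: SLEE is strictly monotone.

If `G` is disconnected, pick non-cut vertices `a` and `b` in two different components (a vertex
farthest from a given one is never a cut vertex), and join `a` to `b`, `a` to the neighbours of
`b` and `b` to the neighbours of `a`. This merges the two components into one. Deleting any other
vertex `w` commutes with the construction, so `w` is a cut vertex before exactly when it is one
after; and `a`, `b` do not become cut vertices because each of them takes over the neighbours of
the other. The new graph thus has the same number of cut vertices and a larger SLEE.
-/

open SimpleGraph

namespace Matrix

theorem IsHermitian.trace_pow {𝕜 n : Type*} [RCLike 𝕜] [Fintype n] [DecidableEq n]
    {A : Matrix n n 𝕜} (hA : A.IsHermitian) (k : ℕ) :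
    (A ^ k).trace = ∑ i, (hA.eigenvalues i : 𝕜) ^ k := by
  conv_lhs => rw [hA.spectral_theorem, ← map_pow, Unitary.conjStarAlgAut_apply, trace_mul_cycle,
    Unitary.coe_star_mul_self, one_mul, diagonal_pow, trace_diagonal]
  simp

theorem IsHermitian.hasSum_trace_pow_div_factorial {n : Type*} [Fintype n] [DecidableEq n]
    {A : Matrix n n ℝ} (hA : A.IsHermitian) :
    HasSum (fun k => (A ^ k).trace / k.factorial) (∑ i, Real.exp (hA.eigenvalues i)) := by
  simp_rw [hA.trace_pow, Finset.sum_div, Real.exp_eq_exp_ℝ]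
  exact hasSum_sum fun i _ => NormedSpace.expSeries_div_hasSum_exp _

theorem pow_apply_le_pow_apply {n R : Type*} [Fintype n] [DecidableEq n] [Semiring R]
    [PartialOrder R] [IsOrderedRing R] {A B : Matrix n n R} (hA : ∀ i j, 0 ≤ A i j)
    (hAB : ∀ i j, A i j ≤ B i j) (k : ℕ) (i j : n) : (A ^ k) i j ≤ (B ^ k) i j := by
  induction k generalizing j with
  | zero => rfl
  | succ k ih =>
    rw [pow_succ, pow_succ, mul_apply, mul_apply]
    exact Finset.sum_le_sum fun l _ =>
      mul_le_mul (ih l) (hAB l j) (hA l j) ((pow_apply_nonneg hA k i l).trans (ih l))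

end Matrix

section SLEE

variable {V : Type*} [Fintype V]

theorem sLap_apply_nonneg (G : SimpleGraph V) (i j : V) : 0 ≤ sLap G i j := by
  unfold sLap
  simp only [Matrix.add_apply, Matrix.diagonal_apply, adjMatrix_apply]
  positivity

theorem sLap_apply_mono {G H : SimpleGraph V} (h : G ≤ H) (i j : V) :
    sLap G i j ≤ sLap H i j := by
  unfold sLap
  simp only [Matrix.add_apply, Matrix.diagonal_apply, adjMatrix_apply]
  gcongr
  · split_ifs
    · exact_mod_cast degree_le_of_le h
    · rfl
  · split_ifs with hG hH
    exacts [le_rfl, absurd (h hG) hH, zero_le_one, le_rfl]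

theorem trace_sLap (G : SimpleGraph V) : (sLap G).trace = 2 * G.edgeFinset.card := by
  have h := congrArg (Nat.cast (R := ℝ)) (sum_degrees_eq_twice_card_edges G)
  push_cast at h
  simpa [sLap, Matrix.trace] using h

theorem hasSum_SLEE (G : SimpleGraph V) :
    HasSum (fun k => (sLap G ^ k).trace / k.factorial) (SLEE G) :=
  (sLap_isHermitian G).hasSum_trace_pow_div_factorial

theorem SLEE_lt_SLEE {G H : SimpleGraph V} (h : G < H) : SLEE G < SLEE H := by
  have hle : ∀ k : ℕ, (sLap G ^ k).trace / k.factorial ≤ (sLap H ^ k).trace / k.factorial :=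
    fun k => by
      gcongr
      exact Finset.sum_le_sum fun i _ =>
        Matrix.pow_apply_le_pow_apply (sLap_apply_nonneg G) (sLap_apply_mono h.le) k i i
  have hlt : (sLap G ^ 1).trace / (1 : ℕ).factorial < (sLap H ^ 1).trace / (1 : ℕ).factorial := by
    simpa [trace_sLap] using Finset.card_lt_card (edgeFinset_ssubset_edgeFinset.mpr h)
  exact hasSum_lt hle hlt (hasSum_SLEE G) (hasSum_SLEE H)

end SLEE

theorem Nat.card_eq_card_add_one_of_surjective {α β : Type*} [Finite α] {f : α → β}
    (hf : Function.Surjective f) {a b : α} (hab : a ≠ b) (hfab : f a = f b)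
    (hinj : Set.InjOn f {b}ᶜ) : Nat.card α = Nat.card β + 1 := by
  have himage : f '' {b}ᶜ = Set.univ := by
    refine Set.eq_univ_of_forall fun y => ?_
    obtain ⟨x, rfl⟩ := hf y
    by_cases hx : x = b
    · exact ⟨a, hab, hx ▸ hfab⟩
    · exact ⟨x, hx, rfl⟩
  rw [← Set.ncard_univ β, ← himage, hinj.ncard_image, ← Set.ncard_univ α,
    ← Set.ncard_sdiff_singleton_add_one (Set.mem_univ b), Set.compl_eq_univ_sdiff]

namespace SimpleGraph

variable {V : Type*} {G : SimpleGraph V}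

theorem eq_of_reachable_of_isolated {a z : V} (ha : ∀ z, ¬G.Adj a z) (h : G.Reachable a z) :
    a = z := by
  obtain ⟨p⟩ := h
  cases p with
  | nil => rfl
  | cons hadj _ => exact absurd hadj (ha _)

theorem Walk.reachable_induce_compl_singleton {u v a : V} (p : G.Walk u v) (hp : a ∉ p.support)
    (hu : u ≠ a) (hv : v ≠ a) : (G.induce {a}ᶜ).Reachable ⟨u, hu⟩ ⟨v, hv⟩ :=
  ⟨p.induce _ fun _ hw (h : _ = a) => hp (h ▸ hw)⟩

theorem exists_walk_not_mem_support_of_forall_dist_le {x a z : V}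
    (hmax : ∀ z, G.Reachable x z → G.dist x z ≤ G.dist x a) (hz : G.Reachable x z)
    (hza : z ≠ a) : ∃ p : G.Walk x z, a ∉ p.support := by
  obtain ⟨p, hp⟩ := hz.exists_walk_length_eq_dist
  refine ⟨p, fun ha => ?_⟩
  have hsplit : (p.takeUntil a ha).length + (p.dropUntil a ha).length = p.length := by
    rw [← Walk.length_append, Walk.take_spec]
  have hdrop : (p.dropUntil a ha).length ≠ 0 := fun h => hza (Walk.eq_of_length_eq_zero h).symm
  have := dist_le (p.takeUntil a ha)
  have := hmax z hz
  omega

theorem injective_map_induce {s : Set V}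
    (hs : ∀ u v : s, G.Reachable u v → (G.induce s).Reachable u v) :
    Function.Injective (ConnectedComponent.map (Embedding.induce (G := G) s).toHom) := by
  intro c c' h
  induction c using ConnectedComponent.ind with | _ u => ?_
  induction c' using ConnectedComponent.ind with | _ v => ?_
  simp only [ConnectedComponent.map_mk, ConnectedComponent.eq] at h ⊢
  exact hs u v h

theorem reachable_sup_fromRel_iff {N : V → V → Prop} {a b : V}
    (hN : ∀ x y, N x y →
      (G.Reachable x a ∨ G.Reachable x b) ∧ (G.Reachable y a ∨ G.Reachable y b))
    (hNab : N a b) {x y : V} :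
    (G ⊔ fromRel N).Reachable x y ↔ G.Reachable x y ∨
      (G.Reachable x a ∨ G.Reachable x b) ∧ (G.Reachable y a ∨ G.Reachable y b) := by
  constructor
  · rintro ⟨p⟩
    induction p with
    | nil => exact .inl .rfl
    | @cons u v w hadj _ ih =>
      have hstep : G.Reachable u v ∨
          (G.Reachable u a ∨ G.Reachable u b) ∧ (G.Reachable v a ∨ G.Reachable v b) := by
        rcases hadj with hadj | ⟨-, huv | hvu⟩
        · exact .inl hadj.reachable
        · exact .inr (hN u v huv)
        · exact .inr (hN v u hvu).symm
      rcases hstep with huv | ⟨hu, hv⟩ <;> rcases ih with hvw | ⟨hv', hw⟩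
      · exact .inl (huv.trans hvw)
      · exact .inr ⟨hv'.imp huv.trans huv.trans, hw⟩
      · exact .inr ⟨hu, hv.imp hvw.symm.trans hvw.symm.trans⟩
      · exact .inr ⟨hu, hw⟩
  · have hab : (G ⊔ fromRel N).Reachable a b := by
      by_cases h : a = b
      · exact h ▸ .rfl
      · exact Adj.reachable (.inr ⟨h, .inl hNab⟩)
    have toA : ∀ z, G.Reachable z a ∨ G.Reachable z b → (G ⊔ fromRel N).Reachable z a :=
      fun z hz => hz.elim (·.mono le_sup_left) (fun h => (h.mono le_sup_left).trans hab.symm)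
    rintro (h | ⟨hx, hy⟩)
    · exact h.mono le_sup_left
    · exact (toA x hx).trans (toA y hy).symm

def crossJoin (G : SimpleGraph V) (a b : V) : SimpleGraph V :=
  G ⊔ fromRel fun p q => (p = a ∧ (q = b ∨ G.Adj b q)) ∨ (p = b ∧ (q = a ∨ G.Adj a q))

variable {a b : V}

theorem crossJoin_comm : crossJoin G a b = crossJoin G b a := by
  simp only [crossJoin, or_comm]

theorem lt_crossJoin (hab : ¬G.Reachable a b) : G < crossJoin G a b := by
  refine lt_of_le_of_ne le_sup_left fun h => hab (Adj.reachable (G := G) ?_)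
  rw [h]
  exact .inr ⟨fun h => hab (h ▸ .rfl), .inl (.inl ⟨rfl, .inl rfl⟩)⟩

theorem crossJoin_induce_compl_singleton {w : V} (ha : a ≠ w) (hb : b ≠ w) :
    (crossJoin G a b).induce {w}ᶜ = crossJoin (G.induce {w}ᶜ) ⟨a, ha⟩ ⟨b, hb⟩ := by
  ext ⟨p, hp⟩ ⟨q, hq⟩
  simp [crossJoin, Subtype.ext_iff]

end SimpleGraph

section Components

variable {V : Type*} [Finite V] {G H : SimpleGraph V}

theorem numComponents_lt_of_le (h : G ≤ H) {x y : V} (hG : ¬G.Reachable x y)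
    (hH : H.Reachable x y) : numComponents H < numComponents G := by
  have : Fintype G.ConnectedComponent := .ofFinite _
  have : Fintype H.ConnectedComponent := .ofFinite _
  rw [numComponents, numComponents, Nat.card_eq_fintype_card, Nat.card_eq_fintype_card]
  refine Fintype.card_lt_of_surjective_not_injective _ (ConnectedComponent.surjective_map_ofLE h)
    fun hinj => hG (ConnectedComponent.eq.mp (hinj ?_))
  simpa [ConnectedComponent.map_mk, ConnectedComponent.eq] using hH

theorem numComponents_induce_le {s : Set V}
    (hs : ∀ u v : s, G.Reachable u v → (G.induce s).Reachable u v) :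
    numComponents (G.induce s) ≤ numComponents G :=
  have : Finite G.ConnectedComponent := Quot.finite _
  Nat.card_le_card_of_injective _ (injective_map_induce hs)

theorem numComponents_induce_compl_singleton_lt {a : V} (ha : ∀ z, ¬G.Adj a z) :
    numComponents (G.induce {a}ᶜ) < numComponents G := by
  have hs : ∀ u v : ({a}ᶜ : Set V), G.Reachable u v → (G.induce {a}ᶜ).Reachable u v := by
    rintro ⟨u, hu⟩ ⟨v, hv⟩ ⟨p⟩
    refine p.reachable_induce_compl_singleton (fun hap => hu ?_) hu hv
    exact (eq_of_reachable_of_isolated ha (p.takeUntil a hap).reachable.symm).symm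
  have : Fintype G.ConnectedComponent := .ofFinite _
  have : Fintype (G.induce {a}ᶜ).ConnectedComponent := .ofFinite _
  rw [numComponents, numComponents, Nat.card_eq_fintype_card, Nat.card_eq_fintype_card]
  refine Fintype.card_lt_of_injective_not_surjective _ (injective_map_induce hs) fun hsurj => ?_
  obtain ⟨c, hc⟩ := hsurj (G.connectedComponentMk a)
  induction c using ConnectedComponent.ind with | _ u => ?_
  simp only [ConnectedComponent.map_mk, ConnectedComponent.eq] at hc
  exact u.2 (eq_of_reachable_of_isolated ha hc.symm).symm

theorem numComponents_sup_fromRel {N : V → V → Prop} {a b : V}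
    (hN : ∀ x y, N x y →
      (G.Reachable x a ∨ G.Reachable x b) ∧ (G.Reachable y a ∨ G.Reachable y b))
    (hNab : N a b) (hab : ¬G.Reachable a b) :
    numComponents (G ⊔ fromRel N) + 1 = numComponents G := by
  have : Finite G.ConnectedComponent := Quot.finite _
  have hreach := fun x y => reachable_sup_fromRel_iff (x := x) (y := y) hN hNab
  refine (Nat.card_eq_card_add_one_of_surjective (a := G.connectedComponentMk a)
    (b := G.connectedComponentMk b) (ConnectedComponent.surjective_map_ofLE le_sup_left)
    (fun h => hab (ConnectedComponent.eq.mp h)) ?_ ?_).symm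
  · simp [ConnectedComponent.eq, hreach]
  · intro c hc c' hc' hcc'
    induction c using ConnectedComponent.ind with | _ u => ?_
    induction c' using ConnectedComponent.ind with | _ v => ?_
    simp only [Set.mem_compl_iff, Set.mem_singleton_iff, ConnectedComponent.eq] at hc hc'
    simp only [ConnectedComponent.map_mk, ConnectedComponent.eq, hreach] at hcc'
    rw [ConnectedComponent.eq]
    rcases hcc' with h | ⟨hu, hv⟩
    · exact h
    · exact (hu.resolve_right hc).trans (hv.resolve_right hc').symm

theorem exists_reachable_not_isCutVertex (G : SimpleGraph V) (x : V) :
    ∃ a, G.Reachable x a ∧ ¬IsCutVertex G a := by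
  obtain ⟨a, hxa, hmax⟩ := Set.exists_max_image {z | G.Reachable x z} (G.dist x)
    (Set.toFinite _) ⟨x, .rfl⟩
  refine ⟨a, hxa, not_lt.mpr (numComponents_induce_le ?_)⟩
  rintro ⟨u, hu⟩ ⟨v, hv⟩ huv
  by_cases hxu : G.Reachable x u
  · obtain ⟨p, hp⟩ := exists_walk_not_mem_support_of_forall_dist_le hmax hxu hu
    obtain ⟨q, hq⟩ := exists_walk_not_mem_support_of_forall_dist_le hmax (hxu.trans huv) hv
    have hx : x ≠ a := fun h => hp (h ▸ p.start_mem_support)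
    exact (p.reachable_induce_compl_singleton hp hx hu).symm.trans
      (q.reachable_induce_compl_singleton hq hx hv)
  · obtain ⟨p⟩ := huv
    exact p.reachable_induce_compl_singleton
      (fun ha => hxu (hxa.trans (p.takeUntil a ha).reachable.symm)) hu hv

end Components

section CrossJoin

variable {V : Type*} {G : SimpleGraph V} {a b : V}

theorem numComponents_crossJoin [Finite V] (hab : ¬G.Reachable a b) :
    numComponents (crossJoin G a b) + 1 = numComponents G := by
  refine numComponents_sup_fromRel ?_ (.inl ⟨rfl, .inl rfl⟩) hab
  rintro p q (⟨rfl, rfl | hq⟩ | ⟨rfl, rfl | hq⟩)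
  exacts [⟨.inl .rfl, .inr .rfl⟩, ⟨.inl .rfl, .inr hq.reachable.symm⟩,
    ⟨.inr .rfl, .inl .rfl⟩, ⟨.inr .rfl, .inl hq.reachable.symm⟩]

theorem isCutVertex_crossJoin_iff [Finite V] (hab : ¬G.Reachable a b) {w : V} (ha : a ≠ w)
    (hb : b ≠ w) : IsCutVertex (crossJoin G a b) w ↔ IsCutVertex G w := by
  have hJ := numComponents_crossJoin hab
  have hJw := numComponents_crossJoin (G := G.induce {w}ᶜ) (a := ⟨a, ha⟩) (b := ⟨b, hb⟩)
    fun h => hab (h.map (Embedding.induce _).toHom)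
  rw [← crossJoin_induce_compl_singleton] at hJw
  unfold IsCutVertex
  omega

theorem not_isCutVertex_crossJoin_left [Finite V] (hab : ¬G.Reachable a b)
    (ha : ¬IsCutVertex G a) : ¬IsCutVertex (crossJoin G a b) a := by
  unfold IsCutVertex at ha ⊢
  have hJ := numComponents_crossJoin hab
  have hle : G.induce {a}ᶜ ≤ (crossJoin G a b).induce {a}ᶜ := fun _ _ h => le_sup_left (a := G) h
  by_cases hiso : ∃ z, G.Adj a z
  · obtain ⟨z, hz⟩ := hiso
    have hba : b ≠ a := fun h => hab (h ▸ .rfl)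
    have hbz : ¬(G.induce {a}ᶜ).Reachable ⟨b, hba⟩ ⟨z, hz.ne'⟩ :=
      fun h => hab (hz.reachable.trans (h.map (Embedding.induce _).toHom).symm)
    have hbz' : b ≠ z := fun h => hab (h ▸ hz.reachable)
    have := numComponents_lt_of_le hle hbz
      (Adj.reachable (show (crossJoin G a b).Adj b z from .inr ⟨hbz', .inl (.inr ⟨rfl, .inr hz⟩)⟩))
    omega
  · simp only [not_exists] at hiso
    have := numComponents_induce_compl_singleton_lt hiso
    have := ConnectedComponent.card_le_card_of_le hle
    unfold numComponents at *
    omega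

theorem cutVertexCount_crossJoin [Fintype V] (hab : ¬G.Reachable a b) (ha : ¬IsCutVertex G a)
    (hb : ¬IsCutVertex G b) : cutVertexCount (crossJoin G a b) = cutVertexCount G := by
  refine congrArg Finset.card (Finset.filter_congr fun w _ => ?_)
  by_cases hwa : a = w
  · subst hwa
    exact iff_of_false (not_isCutVertex_crossJoin_left hab ha) ha
  by_cases hwb : b = w
  · subst hwb
    rw [crossJoin_comm]
    exact iff_of_false (not_isCutVertex_crossJoin_left (fun h => hab h.symm) hb) hb
  exact isCutVertex_crossJoin_iff hab hwa hwb

end CrossJoin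

theorem connected_of_max_SLEE_with_cut_vertices_general [Fintype V] {r : ℕ}
    (hr1 : 1 ≤ r)
    (G : SimpleGraph V) (hG : cutVertexCount G = r)
    (hmax : ∀ H : SimpleGraph V, cutVertexCount H = r → SLEE H ≤ SLEE G) :
    G.Connected := by
  by_contra hnc
  have : Nonempty V := by
    by_contra hV
    simp [cutVertexCount, not_nonempty_iff.mp hV] at hG
    omega
  obtain ⟨x, y, hxy⟩ : ∃ x y, ¬G.Reachable x y := by
    simpa [connected_iff, Preconnected] using hnc
  obtain ⟨a, hxa, ha⟩ := exists_reachable_not_isCutVertex G x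
  obtain ⟨b, hyb, hb⟩ := exists_reachable_not_isCutVertex G y
  have hab : ¬G.Reachable a b := fun h => hxy (hxa.trans (h.trans hyb.symm))
  exact (hmax _ ((cutVertexCount_crossJoin hab ha hb).trans hG)).not_gt
    (SLEE_lt_SLEE (lt_crossJoin hab))

/-- a graph with maximum SLEE among all graphs on `n` vertices with `r` cut
vertices (`1 ≤ r ≤ n - 3`) is connected. -/
theorem connected_of_max_SLEE_with_cut_vertices [Fintype V] {n r : ℕ}
    (hn : Fintype.card V = n) (hr1 : 1 ≤ r) (hr2 : r ≤ n - 3)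
    (G : SimpleGraph V) (hG : cutVertexCount G = r)
    (hmax : ∀ H : SimpleGraph V, cutVertexCount H = r → SLEE H ≤ SLEE G) :
    G.Connected :=
  connected_of_max_SLEE_with_cut_vertices_general hr1 G hG hmax
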